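/- arXiv:1708.02114 — 7 statements merged into one kernel-verified Lean document; each statement's English description precedes it below -/
import Mathlib

section
/- If a linear order of the vertices of a graph contains no k+1 pairwise nested edges, then the edges can be partitioned into k queues, i.e., k sets each containing no two nested edges. (Heath–Rosenberg characterization of queue layouts via rainbows.) -/
/-!
Give each edge `e` the depth `d e`: the largest size of a chain of edges nested inside `e`.
Adding `e` on top of such a chain gives a chain of size `d e + 1`, so `d e < k`; and if `f` is
nested inside `e`, a deepest chain inside `f` together with `f` lies inside `e`, so `d f < d e`.
Hence the level sets of `d` are `k` sets of pairwise non-nested edges (Mirsky's theorem).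
-/

/-- Edges `e`, `f` (each given as an ordered pair with first endpoint smaller)
are nested (`f` inside `e`) if `e.1 < f.1` and `f.2 < e.2`. -/
def NestedPair {V : Type*} [LinearOrder V] (e f : V × V) : Prop :=
  e.1 < f.1 ∧ f.2 < e.2

instance NestedPair.isStrictOrder {V : Type*} [LinearOrder V] :
    IsStrictOrder (V × V) NestedPair where
  irrefl _ h := lt_irrefl _ h.1
  trans _ _ _ h₁ h₂ := ⟨h₁.1.trans h₂.1, h₂.2.trans h₁.2⟩

section ChainDepth

variable {α : Type*} (r : α → α → Prop) (E : Finset α)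

open Classical in
noncomputable def chainDepth (e : α) : ℕ :=
  (E.powerset.filter fun S : Finset α => IsChain r (S : Set α) ∧ ∀ f ∈ S, r e f).sup
    Finset.card

variable {r E}

theorem card_le_chainDepth {e : α} {S : Finset α} (hSE : S ⊆ E) (hS : IsChain r (S : Set α))
    (hSe : ∀ f ∈ S, r e f) : S.card ≤ chainDepth r E e := by
  classical
  exact Finset.le_sup (f := Finset.card)
    (Finset.mem_filter.mpr ⟨Finset.mem_powerset.mpr hSE, hS, hSe⟩)

theorem exists_chain_card_eq_chainDepth (e : α) :
    ∃ S ⊆ E, IsChain r (S : Set α) ∧ (∀ f ∈ S, r e f) ∧ S.card = chainDepth r E e := by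
  classical
  obtain ⟨S, hS, hcard⟩ := Finset.exists_mem_eq_sup
    (E.powerset.filter fun S : Finset α => IsChain r (S : Set α) ∧ ∀ f ∈ S, r e f)
    ⟨∅, by simp⟩ Finset.card
  simp only [Finset.mem_filter, Finset.mem_powerset] at hS
  exact ⟨S, hS.1, hS.2.1, hS.2.2, by rw [chainDepth, hcard]⟩

variable [IsStrictOrder α r]

theorem exists_chain_card_eq_chainDepth_add_one {e : α} (he : e ∈ E) :
    ∃ S ⊆ E, IsChain r (S : Set α) ∧ (∀ f ∈ S, f = e ∨ r e f) ∧
      S.card = chainDepth r E e + 1 := by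
  classical
  obtain ⟨S, hSE, hS, hSe, hcard⟩ := exists_chain_card_eq_chainDepth (r := r) (E := E) e
  have heS : e ∉ S := fun h => irrefl e (hSe e h)
  refine ⟨insert e S, Finset.insert_subset he hSE, ?_, ?_,
    by rw [Finset.card_insert_of_notMem heS, hcard]⟩
  · rw [Finset.coe_insert]
    exact hS.insert fun f hf _ => Or.inl (hSe f hf)
  · intro f hf
    rcases Finset.mem_insert.mp hf with rfl | hf
    · exact Or.inl rfl
    · exact Or.inr (hSe f hf)

theorem chainDepth_lt {k : ℕ} (hk : ∀ S ⊆ E, IsChain r (S : Set α) → S.card ≤ k) {e : α}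
    (he : e ∈ E) : chainDepth r E e < k := by
  obtain ⟨S, hSE, hS, -, hcard⟩ := exists_chain_card_eq_chainDepth_add_one (r := r) he
  have := hk S hSE hS
  omega

theorem chainDepth_lt_chainDepth {e f : α} (hf : f ∈ E) (hef : r e f) :
    chainDepth r E f < chainDepth r E e := by
  obtain ⟨S, hSE, hS, hSf, hcard⟩ := exists_chain_card_eq_chainDepth_add_one (r := r) hf
  have hSe : ∀ g ∈ S, r e g := fun g hg => by
    rcases hSf g hg with rfl | hfg
    · exact hef
    · exact _root_.trans hef hfg
  have := card_le_chainDepth hSE hS hSe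
  omega

end ChainDepth

theorem stmt1_general {V : Type*} [LinearOrder V] (k : ℕ) (E : Finset (V × V))
    (h : ¬ ∃ S : Finset (V × V), S ⊆ E ∧ S.card = k + 1 ∧
      ∀ e ∈ S, ∀ f ∈ S, e ≠ f → NestedPair e f ∨ NestedPair f e) :
    ∃ q : V × V → ℕ, (∀ e ∈ E, q e < k) ∧
      ∀ e ∈ E, ∀ f ∈ E, q e = q f → ¬ NestedPair e f := by
  have hk : ∀ S ⊆ E, IsChain NestedPair (S : Set (V × V)) → S.card ≤ k := by
    intro S hSE hS
    by_contra! hcard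
    obtain ⟨T, hTS, hT⟩ := Finset.exists_subset_card_eq (show k + 1 ≤ S.card by omega)
    exact h ⟨T, hTS.trans hSE, hT, fun e he f hf => hS (hTS he) (hTS hf)⟩
  refine ⟨chainDepth NestedPair E, fun e he => chainDepth_lt hk he, ?_⟩
  intro e _ f hf hq hef
  exact (chainDepth_lt_chainDepth hf hef).ne hq.symm

/-- If a linear order of the vertices of a graph contains no `k+1` pairwise
nested edges, then the edges can be partitioned into `k` queues. -/
theorem stmt1 {V : Type*} [LinearOrder V] (k : ℕ) (E : Finset (V × V))
    (hE : ∀ e ∈ E, e.1 < e.2)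
    (h : ¬ ∃ S : Finset (V × V), S ⊆ E ∧ S.card = k + 1 ∧
      ∀ e ∈ S, ∀ f ∈ S, e ≠ f → NestedPair e f ∨ NestedPair f e) :
    ∃ q : V × V → ℕ, (∀ e ∈ E, q e < k) ∧
      ∀ e ∈ E, ∀ f ∈ E, q e = q f → ¬ NestedPair e f :=
  stmt1_general k E h
end

section
/- Any set of pairwise non-crossing edges between two linearly ordered vertex sets of sizes p and q has cardinality at most p + q − 1. -/
/-- Edges `(a,b)` and `(a',b')` between two linearly ordered sets X-cross if
`a < a'` and `b' < b`, or `a' < a` and `b < b'`. -/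
def XCrossPair {A B : Type*} [LinearOrder A] [LinearOrder B] (e f : A × B) : Prop :=
  (e.1 < f.1 ∧ f.2 < e.2) ∨ (f.1 < e.1 ∧ e.2 < f.2)

/-- Any set of pairwise non-crossing edges between two linearly ordered vertex
sets of sizes `p ≥ 1` and `q ≥ 1` has cardinality at most `p + q - 1`. -/
theorem stmt2 {A B : Type*} [LinearOrder A] [LinearOrder B] [Fintype A] [Fintype B]
    (hA : 1 ≤ Fintype.card A) (hB : 1 ≤ Fintype.card B)
    (E : Finset (A × B))
    (h : ∀ e ∈ E, ∀ f ∈ E, ¬ XCrossPair e f) :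
    E.card ≤ Fintype.card A + Fintype.card B - 1 := by
  set p := Fintype.card A
  set q := Fintype.card B
  let g : A ≃o Fin p := (Fintype.orderIsoFinOfCardEq A rfl).symm
  let k : B ≃o Fin q := (Fintype.orderIsoFinOfCardEq B rfl).symm
  let F : A × B → ℕ := fun e => (g e.1 : ℕ) + (k e.2 : ℕ)
  have hmaps : ∀ e ∈ E, F e ∈ Finset.range (p + q - 1) := by
    intro e _
    simp only [F, Finset.mem_range]
    have h1 : (g e.1 : ℕ) ≤ p - 1 := Nat.le_sub_one_of_lt (g e.1).isLt
    have h2 : (k e.2 : ℕ) ≤ q - 1 := Nat.le_sub_one_of_lt (k e.2).isLt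
    omega
  have hinj : Set.InjOn F E := by
    intro e he f hf hef
    have hx := h e he f hf
    simp only [F] at hef
    by_contra hne
    rcases lt_trichotomy e.1 f.1 with h1 | h1 | h1
    · have hb : ¬ f.2 < e.2 := fun hb => hx (Or.inl ⟨h1, hb⟩)
      have hg : (g e.1 : ℕ) < g f.1 := g.strictMono h1
      have hk : (k e.2 : ℕ) ≤ k f.2 := k.le_iff_le.mpr (not_lt.mp hb)
      omega
    · rw [h1] at hef
      have h2 : e.2 ≠ f.2 := fun h2 => hne (Prod.ext h1 h2)
      have hk : (k e.2 : ℕ) ≠ k f.2 := fun hk =>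
        h2 (k.injective (Fin.ext hk))
      omega
    · have hb : ¬ e.2 < f.2 := fun hb => hx (Or.inr ⟨h1, hb⟩)
      have hg : (g f.1 : ℕ) < g e.1 := g.strictMono h1
      have hk : (k f.2 : ℕ) ≤ k e.2 := k.le_iff_le.mpr (not_lt.mp hb)
      omega
  calc E.card ≤ (Finset.range (p + q - 1)).card :=
        Finset.card_le_card_of_injOn F hmaps hinj
    _ = p + q - 1 := Finset.card_range _
end

section
/- Every graph that admits a 2-track layout is a forest (contains no cycle). -/
/-!
Take the largest vertex `a` of a cycle and its two cycle-neighbours `b < b'`. The vertex `b'`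
has a second cycle-neighbour `a' ≠ a`, so `a' < a`. Then `a'` lies on the track of `a` and `b'`
on the track of `b`, and the edges `a'b'` and `ab` X-cross.
-/

lemma Fin.two_eq_of_ne_of_ne {x y z : Fin 2} (hx : x ≠ z) (hy : y ≠ z) : x = y := by
  revert x y z; decide

namespace SimpleGraph

variable {V : Type*}

/-- Each track is ordered by the restriction of the linear order of `V`. -/
structure IsTwoTrackLayout [LinearOrder V] (G : SimpleGraph V) (t : V → Fin 2) : Prop where
  ne_of_adj : ∀ u v, G.Adj u v → t u ≠ t v
  not_crossing : ∀ a b a' b' : V, G.Adj a b → G.Adj a' b' → t a = t a' → t b = t b' →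
    ¬ (a < a' ∧ b' < b)

namespace IsTwoTrackLayout

variable [LinearOrder V] {G : SimpleGraph V} {t : V → Fin 2}

lemma not_zigzag (h : G.IsTwoTrackLayout t) {a a' b b' : V} (ha : a' < a) (hb : b < b')
    (hab : G.Adj a b) (hab' : G.Adj a b') (ha'b' : G.Adj a' b') : False := by
  have hta : t a' = t a := Fin.two_eq_of_ne_of_ne (h.ne_of_adj _ _ ha'b') (h.ne_of_adj _ _ hab')
  have htb : t b' = t b :=
    Fin.two_eq_of_ne_of_ne (h.ne_of_adj _ _ hab'.symm) (h.ne_of_adj _ _ hab.symm)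
  exact h.not_crossing a' b' a b ha'b' hab hta htb ⟨ha, hb⟩

lemma false_of_nontrivial_neighborSet (h : G.IsTwoTrackLayout t) (H : G.Subgraph)
    (hfin : H.verts.Finite) (hne : H.verts.Nonempty)
    (hdeg : ∀ v ∈ H.verts, (H.neighborSet v).Nontrivial) : False := by
  obtain ⟨a, ha, hmax⟩ := Set.exists_max_image H.verts id hfin hne
  obtain ⟨b, hb, b', hb', hbb'⟩ := hdeg a ha
  wlog hlt : b < b' generalizing b b'
  · exact this b' hb' b hb hbb'.symm (hbb'.lt_or_gt.resolve_left hlt)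
  obtain ⟨a', ha', a'', ha'', ha'a''⟩ := hdeg b' (H.edge_vert hb'.symm)
  obtain ⟨c, hc, hca⟩ : ∃ c, H.Adj b' c ∧ c ≠ a := by
    by_cases ha'a : a' = a
    · exact ⟨a'', ha'', fun ha''a => ha'a'' (ha'a.trans ha''a.symm)⟩
    · exact ⟨a', ha', ha'a⟩
  replace hca : c < a := (hmax c (H.edge_vert hc.symm)).lt_of_ne hca
  exact h.not_zigzag hca hlt (H.adj_sub hb) (H.adj_sub hb') (H.adj_sub hc).symm

end IsTwoTrackLayout

lemma Walk.IsCycle.nontrivial_neighborSet_toSubgraph {u v : V} {G : SimpleGraph V}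
    {c : G.Walk u u} (hc : c.IsCycle) (hv : v ∈ c.support) :
    (c.toSubgraph.neighborSet v).Nontrivial :=
  (Set.one_lt_ncard_iff_nontrivial_and_finite.mp
    (by rw [hc.ncard_neighborSet_toSubgraph_eq_two hv]; norm_num)).1

lemma IsTwoTrackLayout.isAcyclic [LinearOrder V] {G : SimpleGraph V} {t : V → Fin 2}
    (h : G.IsTwoTrackLayout t) : G.IsAcyclic := by
  intro u c hc
  refine h.false_of_nontrivial_neighborSet c.toSubgraph ?_ ⟨u, c.start_mem_verts_toSubgraph⟩
    fun v hv => hc.nontrivial_neighborSet_toSubgraph (c.mem_verts_toSubgraph.mp hv)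
  rw [c.verts_toSubgraph]
  exact c.support.finite_toSet

end SimpleGraph

/-- Every graph that admits a 2-track layout is a forest.  A 2-track layout is
given by a track assignment `t : V → Fin 2` whose classes are independent sets
(each linearly ordered, here via the linear order on `V`), such that no two
edges between the two tracks X-cross. -/
theorem stmt4 {V : Type*} [LinearOrder V] (G : SimpleGraph V) (t : V → Fin 2)
    (hind : ∀ u v, G.Adj u v → t u ≠ t v)
    (hx : ∀ a b a' b' : V, G.Adj a b → G.Adj a' b' → t a = t a' → t b = t b' →
      ¬ (a < a' ∧ b' < b)) :
    G.IsAcyclic :=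
  SimpleGraph.IsTwoTrackLayout.isAcyclic ⟨hind, hx⟩
end

section
/- If a graph G admits a k-track layout, then G admits a (k−1)-queue layout; in particular the queue number of G is at most its track number minus one. -/
/-- If a graph `G` admits a `k`-track layout, then `G` admits a `(k-1)`-queue
layout with respect to the vertex ordering that concatenates the tracks: the
order puts `u` before `v` iff `t u < t v`, or `t u = t v` and `u < v` in the
track order (given by the linear order on `V`). -/
theorem stmt5 {V : Type*} [LinearOrder V] (k : ℕ) (G : SimpleGraph V) (t : V → Fin k)
    (hind : ∀ u v, G.Adj u v → t u ≠ t v)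
    (hx : ∀ a b a' b' : V, G.Adj a b → G.Adj a' b' → t a = t a' → t b = t b' →
      ¬ (a < a' ∧ b' < b)) :
    ∃ q : V × V → ℕ,
      (∀ u v, G.Adj u v → q (u, v) < k - 1) ∧
      ∀ u v x y : V, G.Adj u v → G.Adj x y →
        (t u < t v ∨ (t u = t v ∧ u < v)) →
        (t x < t y ∨ (t x = t y ∧ x < y)) →
        q (u, v) = q (x, y) →
        ¬ ((t u < t x ∨ (t u = t x ∧ u < x)) ∧ (t y < t v ∨ (t y = t v ∧ y < v))) := by
  refine ⟨fun p => ((t p.1).val - (t p.2).val) + ((t p.2).val - (t p.1).val) - 1, ?_, ?_⟩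
  · intro u v huv
    show ((t u).val - (t v).val) + ((t v).val - (t u).val) - 1 < k - 1
    have hne : (t u).val ≠ (t v).val := fun h => hind u v huv (Fin.val_inj.mp h)
    have h1 := (t u).isLt
    have h2 := (t v).isLt
    omega
  · rintro u v x y huv hxy hord1 hord2 hq ⟨h1, h2⟩
    have hne1 : (t u).val ≠ (t v).val := fun h => hind u v huv (Fin.val_inj.mp h)
    have hne2 : (t x).val ≠ (t y).val := fun h => hind x y hxy (Fin.val_inj.mp h)
    -- orientation: t u < t v and t x < t y as values
    have huv' : (t u).val < (t v).val := by
      rcases hord1 with h | ⟨h, _⟩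
      · exact h
      · exact absurd (congrArg Fin.val h) hne1
    have hxy' : (t x).val < (t y).val := by
      rcases hord2 with h | ⟨h, _⟩
      · exact h
      · exact absurd (congrArg Fin.val h) hne2
    simp only at hq
    have hux : (t u).val < (t x).val ∨ ((t u).val = (t x).val ∧ u < x) := by
      rcases h1 with h | ⟨h, h'⟩
      · exact Or.inl h
      · exact Or.inr ⟨congrArg Fin.val h, h'⟩
    have hyv : (t y).val < (t v).val ∨ ((t y).val = (t v).val ∧ y < v) := by
      rcases h2 with h | ⟨h, h'⟩
      · exact Or.inl h
      · exact Or.inr ⟨congrArg Fin.val h, h'⟩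
    rcases hux with h | ⟨heq1, hlt1⟩
    · rcases hyv with h' | ⟨heq2, _⟩ <;> omega
    · rcases hyv with h' | ⟨heq2, hlt2⟩
      · omega
      · exact hx u v x y huv hxy (Fin.val_inj.mp heq1) (Fin.val_inj.mp heq2).symm
          ⟨hlt1, hlt2⟩
end

section
/- A graph on n ≥ 3 vertices admitting a 1-queue layout has at most 2n − 3 edges. -/
/-- A graph on `n ≥ 3` vertices admitting a 1-queue layout (a vertex ordering
with no two nested edges) has at most `2n - 3` edges. -/
theorem stmt7 {V : Type*} [Fintype V] [LinearOrder V] (G : SimpleGraph V)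
    [DecidableRel G.Adj] (n : ℕ) (hn : Fintype.card V = n) (h3 : 3 ≤ n)
    (hq : ∀ u v x y : V, G.Adj u v → G.Adj x y → u < x → x < y → y < v → False) :
    G.edgeFinset.card ≤ 2 * n - 3 := by
  classical
  let σ : V ≃o Fin n := (monoEquivOfFin V hn).symm
  have hσlt : ∀ a b : V, a < b ↔ (σ a : ℕ) < (σ b : ℕ) := by
    intro a b
    rw [← σ.lt_iff_lt]
    exact Fin.lt_iff_val_lt_val
  let f : Sym2 V → ℕ := Sym2.lift ⟨fun u v => (σ u : ℕ) + (σ v : ℕ),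
    fun u v => by ring⟩
  -- key: two edges (ordered) with equal sums coincide
  have aux : ∀ u v x y : V, G.Adj u v → G.Adj x y → u < v → x < y →
      (σ u : ℕ) + (σ v : ℕ) = (σ x : ℕ) + (σ y : ℕ) → u = x ∧ v = y := by
    intro u v x y huv hxy huv' hxy' hsum
    rcases lt_trichotomy u x with h | h | h
    · exfalso
      have h1 : (σ u : ℕ) < (σ x : ℕ) := (hσlt u x).1 h
      have h2 : (σ y : ℕ) < (σ v : ℕ) := by omega
      exact hq u v x y huv hxy h hxy' ((hσlt y v).2 h2)
    · subst h
      have : (σ v : ℕ) = (σ y : ℕ) := by omega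
      have : σ v = σ y := Fin.ext this
      exact ⟨rfl, σ.injective this⟩
    · exfalso
      have h1 : (σ x : ℕ) < (σ u : ℕ) := (hσlt x u).1 h
      have h2 : (σ v : ℕ) < (σ y : ℕ) := by omega
      exact hq x y u v hxy huv h huv' ((hσlt v y).2 h2)
  have hmaps : ∀ e ∈ G.edgeFinset, f e ∈ Finset.Icc 1 (2 * n - 3) := by
    intro e he
    induction e with
    | _ u v =>
      rw [SimpleGraph.mem_edgeFinset, SimpleGraph.mem_edgeSet] at he
      have hne : (σ u : ℕ) ≠ (σ v : ℕ) := fun h =>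
        he.ne (σ.injective (Fin.ext h))
      have h1 : (σ u : ℕ) < n := (σ u).isLt
      have h2 : (σ v : ℕ) < n := (σ v).isLt
      simp only [f, Sym2.lift_mk, Finset.mem_Icc]
      omega
  have hinj : Set.InjOn f G.edgeFinset := by
    intro e1 he1 e2 he2 heq
    induction e1 with
    | _ u v =>
      induction e2 with
      | _ x y =>
        rw [Finset.mem_coe, SimpleGraph.mem_edgeFinset,
          SimpleGraph.mem_edgeSet] at he1 he2
        simp only [f, Sym2.lift_mk] at heq
        rcases he1.ne.lt_or_gt with h1 | h1 <;>
          rcases he2.ne.lt_or_gt with h2 | h2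
        · obtain ⟨ha, hb⟩ := aux u v x y he1 he2 h1 h2 heq
          rw [ha, hb]
        · obtain ⟨ha, hb⟩ := aux u v y x he1 he2.symm h1 h2 (by omega)
          rw [ha, hb, Sym2.eq_swap]
        · obtain ⟨ha, hb⟩ := aux v u x y he1.symm he2 h1 h2 (by omega)
          rw [← ha, ← hb, Sym2.eq_swap]
        · obtain ⟨ha, hb⟩ := aux v u y x he1.symm he2.symm h1 h2 (by omega)
          rw [ha, hb, Sym2.eq_swap, Sym2.eq_swap]
  calc G.edgeFinset.card ≤ (Finset.Icc 1 (2 * n - 3)).card :=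
        Finset.card_le_card_of_injOn f hmaps hinj
    _ = 2 * n - 3 := by rw [Nat.card_Icc]; omega
end

section
/- Every caterpillar admits a 2-track layout. -/
/-!
Let `p` be the spine, starting at `u`, and let `d w = dist u w`. Every edge joins consecutive
depths, and since the tree has no cycle, every neighbour of a vertex off the spine lies on the
spine, one level higher. Put the two parity classes of `d` on the two tracks and order them
lexicographically by the key `(d w, 0)` for spine vertices and `(d w - 1, rank)` with a positive
rank for the others. So the leaves hanging off the spine vertex of depth `i` lie on the other
track right between the spine vertices of depths `i - 1` and `i + 1`, and a case check on the
depths shows that no two edges cross. Finally a finite lexicographic order is re-encoded in `ℕ`.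
-/

open SimpleGraph Walk Function

namespace SimpleGraph

variable {V : Type*} {G : SimpleGraph V} {u v : V} {p : G.Walk u v}

theorem IsAcyclic.length_eq_dist (hG : G.IsAcyclic) (hp : p.IsPath) : p.length = G.dist u v := by
  obtain ⟨q, hq, hql⟩ := p.reachable.exists_path_of_dist
  rw [← hql, show p = q from congrArg Subtype.val ((hG.subsingleton_path u v).elim ⟨p, hp⟩ ⟨q, hq⟩)]

theorem IsAcyclic.injOn_dist_support (hG : G.IsAcyclic) (hp : p.IsPath) :
    Set.InjOn (G.dist u) {w | w ∈ p.support} := by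
  classical
  intro w hw w' hw' h
  rw [← p.getVert_length_takeUntil hw, ← p.getVert_length_takeUntil hw',
    hG.length_eq_dist (hp.takeUntil hw), hG.length_eq_dist (hp.takeUntil hw'), h]

theorem Walk.IsPath.takeUntil_concat [DecidableEq V] (hp : p.IsPath) {x y : V} (hx : x ∈ p.support)
    (hy : y ∉ p.support) (hxy : G.Adj x y) : ((p.takeUntil x hx).concat hxy).IsPath :=
  (hp.takeUntil hx).concat (fun h => hy (p.support_takeUntil_subset_support hx h)) hxy

theorem IsAcyclic.dist_eq_dist_add_one_of_adj_of_notMem_support (hG : G.IsAcyclic)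
    (hp : p.IsPath) {x y : V} (hx : x ∈ p.support) (hy : y ∉ p.support) (hxy : G.Adj x y) :
    G.dist u y = G.dist u x + 1 := by
  classical
  rw [← hG.length_eq_dist (hp.takeUntil_concat hx hy hxy), length_concat,
    hG.length_eq_dist (hp.takeUntil hx)]

theorem IsAcyclic.not_adj_of_notMem_support (hG : G.IsAcyclic) (hp : p.IsPath) {x y x' y' : V}
    (hx : x ∉ p.support) (hy : y ∉ p.support) (hx' : x' ∈ p.support) (hy' : y' ∈ p.support)
    (hxx' : G.Adj x' x) (hyy' : G.Adj y' y) : ¬ G.Adj x y := by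
  classical
  intro hxy
  have mem_concat : ∀ {z w} (hz : z ∈ p.support) (hzw : G.Adj z w) {a},
      a ∈ ((p.takeUntil z hz).concat hzw).support → a ∈ p.support ∨ a = w := by
    intro z w hz hzw a ha
    rw [support_concat, List.mem_append, List.mem_singleton] at ha
    exact ha.imp_left (p.support_takeUntil_subset_support hz ·)
  by_cases h : x ∈ ((p.takeUntil y' hy').concat hyy').support
  · exact (mem_concat hy' hyy' h).elim hx hxy.ne
  · exact (mem_concat hx' hxx' (hG.mem_support_of_ne_mem_support_of_adj_of_isPath
      (hp.takeUntil_concat hx' hx hxx') (hp.takeUntil_concat hy' hy hyy') hxy h)).elim hy hxy.ne'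

def IsTwoTrackLayout_s10 {α : Type*} [LT α] (G : SimpleGraph V) (t : V → Fin 2) (f : V → α) : Prop :=
  Injective f ∧ (∀ u v, G.Adj u v → t u ≠ t v) ∧
    ∀ a b a' b' : V, G.Adj a b → G.Adj a' b' → t a = t a' → t b = t b' →
      ¬ (f a < f a' ∧ f b' < f b)

theorem IsTwoTrackLayout_s10.of_lt_iff_lt {α β : Type*} [LinearOrder α] [Preorder β] {t : V → Fin 2}
    {f : V → α} {g : V → β} (h : IsTwoTrackLayout_s10 G t f) (hg : ∀ a b, g a < g b ↔ f a < f b) :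
    IsTwoTrackLayout_s10 G t g := by
  obtain ⟨hinj, hcol, hcross⟩ := h
  refine ⟨fun a b hab => hinj ?_, hcol, by simpa only [hg] using hcross⟩
  by_contra hne
  rcases lt_or_gt_of_ne hne with hlt | hlt <;> simp [← hg, hab] at hlt

theorem exists_nat_lt_iff_lt {α : Type*} [Finite V] [LinearOrder α] (f : V → α) :
    ∃ g : V → ℕ, ∀ a b, g a < g b ↔ f a < f b := by
  classical
  have := Fintype.ofFinite V
  let s := Finset.univ.image f
  refine ⟨fun a => (s.orderIsoOfFin rfl).symm ⟨f a, Finset.mem_image_of_mem f (Finset.mem_univ a)⟩,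
    fun a b => ?_⟩
  rw [← Fin.lt_def, OrderIso.lt_iff_lt, Subtype.mk_lt_mk]

theorem IsTwoTrackLayout_s10.exists_nat {α : Type*} [Finite V] [LinearOrder α] {t : V → Fin 2}
    {f : V → α} (h : IsTwoTrackLayout_s10 G t f) : ∃ g : V → ℕ, IsTwoTrackLayout_s10 G t g :=
  (exists_nat_lt_iff_lt f).imp fun _ hg => h.of_lt_iff_lt hg

theorem exists_isTwoTrackLayout_of_spine [Countable V] {S : Set V} {d : V → ℕ}
    (hinj : S.InjOn d) (hspine : ∀ x y, G.Adj x y → x ∈ S → y ∈ S → d x = d y + 1 ∨ d y = d x + 1)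
    (hleaf : ∀ x y, G.Adj x y → y ∉ S → x ∈ S ∧ d y = d x + 1) :
    ∃ (t : V → Fin 2) (f : V → ℕ ×ₗ ℕ), IsTwoTrackLayout_s10 G t f := by
  classical
  obtain ⟨e, he⟩ := exists_injective_nat V
  let ℓ : V → ℕ := fun w => if w ∈ S then 0 else 1
  let r : V → ℕ := fun w => if w ∈ S then 0 else e w + 1
  have hvert : ∀ w, (ℓ w = 0 ∧ r w = 0) ∨ (ℓ w = 1 ∧ 0 < r w) := by
    intro w
    by_cases hw : w ∈ S <;> simp [ℓ, r, hw]
  have hedge : ∀ x y, G.Adj x y → (ℓ x = 0 ∧ ℓ y = 0 ∧ (d x = d y + 1 ∨ d y = d x + 1)) ∨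
      (ℓ x = 0 ∧ ℓ y = 1 ∧ d y = d x + 1) ∨ (ℓ x = 1 ∧ ℓ y = 0 ∧ d x = d y + 1) := by
    intro x y hxy
    by_cases hx : x ∈ S <;> by_cases hy : y ∈ S
    · simp [ℓ, hx, hy, hspine x y hxy hx hy]
    · simp [ℓ, hx, hy, (hleaf x y hxy hy).2]
    · simp [ℓ, hx, hy, (hleaf y x hxy.symm hx).2]
    · exact absurd (hleaf x y hxy hy).1 hx
  refine ⟨fun w => ⟨d w % 2, Nat.mod_lt _ two_pos⟩, fun w => toLex (d w - ℓ w, r w), ?_, ?_, ?_⟩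
  · intro w w' h
    simp only [toLex_inj, Prod.mk.injEq] at h
    by_cases hw : w ∈ S <;> by_cases hw' : w' ∈ S
    · exact hinj hw hw' (by simpa [ℓ, hw, hw'] using h.1)
    · simp [r, hw, hw'] at h
    · simp [r, hw, hw'] at h
    · exact he (by simpa [r, hw, hw'] using h.2)
  · intro x y hxy hxy'
    have := Fin.mk.inj_iff.mp hxy'
    have := hedge x y hxy
    omega
  · rintro a b a' b' hab hab' ha hb ⟨hlt, hlt'⟩
    simp only [Fin.mk.injEq] at ha hb
    rw [Prod.Lex.toLex_lt_toLex] at hlt hlt'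
    have := hedge a b hab
    have := hedge a' b' hab'
    have := hvert a
    have := hvert b
    have := hvert a'
    have := hvert b'
    omega

end SimpleGraph

theorem stmt10_general {V : Type*} [Fintype V] (G : SimpleGraph V)
    (hT : G.IsTree)
    (hcat : ∃ (u v : V) (p : G.Walk u v), p.IsPath ∧
      ∀ w : V, w ∈ p.support ∨ ∃ x ∈ p.support, G.Adj w x) :
    ∃ (t : V → Fin 2) (f : V → ℕ), Function.Injective f ∧
      (∀ u v, G.Adj u v → t u ≠ t v) ∧
      (∀ a b a' b' : V, G.Adj a b → G.Adj a' b' → t a = t a' → t b = t b' →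
        ¬ (f a < f a' ∧ f b' < f b)) := by
  obtain ⟨u, v, p, hp, hdom⟩ := hcat
  have hleaf : ∀ x y, G.Adj x y → y ∉ p.support →
      x ∈ p.support ∧ G.dist u y = G.dist u x + 1 := by
    intro x y hxy hy
    have hx : x ∈ p.support := by
      by_contra hx
      obtain ⟨x', hx', hxx'⟩ := (hdom x).resolve_left hx
      obtain ⟨y', hy', hyy'⟩ := (hdom y).resolve_left hy
      exact hT.isAcyclic.not_adj_of_notMem_support hp hx hy hx' hy' hxx'.symm hyy'.symm hxy
    exact ⟨hx, hT.isAcyclic.dist_eq_dist_add_one_of_adj_of_notMem_support hp hx hy hxy⟩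
  obtain ⟨t, f, hf⟩ := exists_isTwoTrackLayout_of_spine (hT.isAcyclic.injOn_dist_support hp)
    (fun x y hxy _ _ => hT.dist_eq_dist_add_one_of_adj u hxy) hleaf
  exact ⟨t, hf.exists_nat⟩

/-- Every caterpillar (a tree in which every vertex is within distance one of a
central path) admits a 2-track layout: a partition of the vertices into two
independent tracks, each linearly ordered (via `f`), with no X-crossing. -/
theorem stmt10 {V : Type*} [Fintype V] [DecidableEq V] (G : SimpleGraph V)
    (hT : G.IsTree)
    (hcat : ∃ (u v : V) (p : G.Walk u v), p.IsPath ∧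
      ∀ w : V, w ∈ p.support ∨ ∃ x ∈ p.support, G.Adj w x) :
    ∃ (t : V → Fin 2) (f : V → ℕ), Function.Injective f ∧
      (∀ u v, G.Adj u v → t u ≠ t v) ∧
      (∀ a b a' b' : V, G.Adj a b → G.Adj a' b' → t a = t a' → t b = t b' →
        ¬ (f a < f a' ∧ f b' < f b)) :=
  stmt10_general G hT hcat
end

section
/- Let G be a graph, ℓ : V(G) → ℕ a track assignment, and σ a linear order on each track, such that every edge uv satisfies 1 ≤ |ℓ(u) − ℓ(v)| < D. Define the wrapped layout: vertex v goes to track ℓ(v) mod 2D, and within a wrapped track, vertices are ordered lexicographically by (⌊ℓ(v)/(2D)⌋, σ-position). Then any two edges that X-cross in the wrapped layout already X-crossed between a pair of original tracks; in particular, if the original layout has X-crossing number at most X between every pair of tracks, so does the wrapped layout on 2D tracks. -/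
/-- If `a ≡ b [MOD n]` and `a / n < b / n` then `a + n ≤ b`. -/
lemma stmt13_aux_lt (n a b : ℕ) (hm : a % n = b % n) (hq : a / n < b / n) :
    a + n ≤ b := by
  have ha := Nat.div_add_mod a n
  have hb := Nat.div_add_mod b n
  have hq' : a / n + 1 ≤ b / n := hq
  have h : n * (a / n + 1) ≤ n * (b / n) := Nat.mul_le_mul_left n hq'
  rw [Nat.mul_add, Nat.mul_one] at h
  linarith

/-- If `a ≡ b [MOD n]` and `a / n = b / n` then `a = b`. -/
lemma stmt13_aux_eq (n a b : ℕ) (hm : a % n = b % n) (hq : a / n = b / n) :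
    a = b := by
  have ha := Nat.div_add_mod a n
  have hb := Nat.div_add_mod b n
  rw [← ha, ← hb, hm, hq]

/-- Wrapping lemma: given a layout `ℓ` (track assignment) with per-track order
`σ` in which every edge has gap at least 1 and strictly less than `D`, any two
edges that X-cross in the wrapped layout (track `ℓ v % 2D`, order lexicographic
by `(ℓ v / 2D, σ v)`) already X-crossed between a pair of original tracks. -/
theorem stmt13 {V : Type*} (G : SimpleGraph V) (D : ℕ) (hD : 1 ≤ D)
    (ℓ : V → ℕ) (σ : V → ℕ)
    (hσ : ∀ u v, ℓ u = ℓ v → σ u = σ v → u = v)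
    (hgap₁ : ∀ u v, G.Adj u v → 1 ≤ |(ℓ u : ℤ) - (ℓ v : ℤ)|)
    (hgap₂ : ∀ u v, G.Adj u v → |(ℓ u : ℤ) - (ℓ v : ℤ)| < D) :
    ∀ u v u' v' : V, G.Adj u v → G.Adj u' v' →
      ℓ u % (2 * D) = ℓ u' % (2 * D) → ℓ v % (2 * D) = ℓ v' % (2 * D) →
      (ℓ u / (2 * D) < ℓ u' / (2 * D) ∨
        (ℓ u / (2 * D) = ℓ u' / (2 * D) ∧ σ u < σ u')) →
      (ℓ v' / (2 * D) < ℓ v / (2 * D) ∨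
        (ℓ v' / (2 * D) = ℓ v / (2 * D) ∧ σ v' < σ v)) →
      ℓ u = ℓ u' ∧ ℓ v = ℓ v' ∧ σ u < σ u' ∧ σ v' < σ v := by
  intro u v u' v' huv hu'v' hmu hmv hlu hlv
  have g1 := abs_lt.mp (hgap₂ u v huv)
  have g2 := abs_lt.mp (hgap₂ u' v' hu'v')
  obtain ⟨g1a, g1b⟩ := g1
  obtain ⟨g2a, g2b⟩ := g2
  -- first: ℓ u = ℓ u'
  have hA : ℓ u = ℓ u' ∧ σ u < σ u' := by
    rcases hlu with h | ⟨hq, hs⟩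
    · exfalso
      have h1 := stmt13_aux_lt (2 * D) _ _ hmu h
      rcases hlv with h' | ⟨hq', _⟩
      · have h2 := stmt13_aux_lt (2 * D) _ _ hmv.symm h'
        omega
      · have h2 := stmt13_aux_eq (2 * D) _ _ hmv.symm hq'
        omega
    · exact ⟨stmt13_aux_eq (2 * D) _ _ hmu hq, hs⟩
  obtain ⟨hAe, hAs⟩ := hA
  have hB : ℓ v' = ℓ v ∧ σ v' < σ v := by
    rcases hlv with h' | ⟨hq', hs'⟩
    · exfalso
      have h2 := stmt13_aux_lt (2 * D) _ _ hmv.symm h'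
      omega
    · exact ⟨stmt13_aux_eq (2 * D) _ _ hmv.symm hq', hs'⟩
  exact ⟨hAe, hB.1.symm, hAs, hB.2⟩
end
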